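/- arXiv:1705.09715 — 2 statements merged into one kernel-verified Lean document; each statement's English description precedes it below -/
import Mathlib

section
/- The Farkas kernel K₁ᶠ(x,y) = G_{n_y n_y n_y} + 3 G_{n_y τ_y τ_y} of the biharmonic Green's function G(x,y) = (1/(8π))|x−y|²log|x−y| equals (1/π)·(r·n(y))³/(r·r)², where r = y − x. -/
noncomputable section
open Real MeasureTheory

/-- partial/directional derivative of `f` at `x` in direction `v`. -/
def pd (f : ℝ × ℝ → ℝ) (v x : ℝ × ℝ) : ℝ := fderiv ℝ f x v

/-- Laplacian on `ℝ²`. -/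
def lap (f : ℝ × ℝ → ℝ) (x : ℝ × ℝ) : ℝ :=
  pd (fun y => pd f (1, 0) y) (1, 0) x + pd (fun y => pd f (0, 1) y) (0, 1) x

/-- Euclidean norm on `ℝ × ℝ`. -/
def nrm (x : ℝ × ℝ) : ℝ := Real.sqrt (x.1 ^ 2 + x.2 ^ 2)

/-- Euclidean dot product on `ℝ × ℝ`. -/
def dot (a b : ℝ × ℝ) : ℝ := a.1 * b.1 + a.2 * b.2

def pmap (a b : ℝ) : ℝ × ℝ →L[ℝ] ℝ :=
  a • ContinuousLinearMap.fst ℝ ℝ ℝ + b • ContinuousLinearMap.snd ℝ ℝ ℝ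

lemma pmap_apply (a b : ℝ) (v : ℝ × ℝ) : pmap a b v = a * v.1 + b * v.2 := by
  simp [pmap]

def Qf (x z : ℝ × ℝ) : ℝ := (z.1 - x.1) ^ 2 + (z.2 - x.2) ^ 2

lemma Qf_ne (x z : ℝ × ℝ) (h : z ≠ x) : Qf x z ≠ 0 := by
  unfold Qf
  intro hc
  apply h
  have h1 : (z.1 - x.1) ^ 2 = 0 := by nlinarith [sq_nonneg (z.1 - x.1), sq_nonneg (z.2 - x.2)]
  have h2 : (z.2 - x.2) ^ 2 = 0 := by nlinarith [sq_nonneg (z.1 - x.1), sq_nonneg (z.2 - x.2)]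
  have h1' : z.1 = x.1 := by nlinarith [sq_nonneg (z.1 - x.1)]
  have h2' : z.2 = x.2 := by nlinarith [sq_nonneg (z.2 - x.2)]
  exact Prod.ext h1' h2'

lemma hasFDerivAt_Qf (x z : ℝ × ℝ) :
    HasFDerivAt (Qf x) (pmap (2 * (z.1 - x.1)) (2 * (z.2 - x.2))) z := by
  have h1 : HasFDerivAt (fun z : ℝ × ℝ => z.1 - x.1) (ContinuousLinearMap.fst ℝ ℝ ℝ) z :=
    (hasFDerivAt_fst (𝕜 := ℝ)).sub_const x.1
  have h2 : HasFDerivAt (fun z : ℝ × ℝ => z.2 - x.2) (ContinuousLinearMap.snd ℝ ℝ ℝ) z :=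
    (hasFDerivAt_snd (𝕜 := ℝ)).sub_const x.2
  unfold Qf
  simp only [pow_two]
  refine ((h1.mul h1).add (h2.mul h2)).congr_fderiv ?_
  refine ContinuousLinearMap.ext fun w => ?_
  simp [pmap]
  ring

lemma hasFDerivAt_Av (x v z : ℝ × ℝ) :
    HasFDerivAt (fun z : ℝ × ℝ => (z.1 - x.1) * v.1 + (z.2 - x.2) * v.2) (pmap v.1 v.2) z := by
  have h1 : HasFDerivAt (fun z : ℝ × ℝ => z.1 - x.1) (ContinuousLinearMap.fst ℝ ℝ ℝ) z :=
    (hasFDerivAt_fst (𝕜 := ℝ)).sub_const x.1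
  have h2 : HasFDerivAt (fun z : ℝ × ℝ => z.2 - x.2) (ContinuousLinearMap.snd ℝ ℝ ℝ) z :=
    (hasFDerivAt_snd (𝕜 := ℝ)).sub_const x.2
  refine ((h1.mul_const v.1).add (h2.mul_const v.2)).congr_fderiv ?_
  refine ContinuousLinearMap.ext fun w => ?_
  simp [pmap]

def g1 (x v z : ℝ × ℝ) : ℝ :=
  (16 * π)⁻¹ * ((Real.log (Qf x z) + 1) * (2 * ((z.1 - x.1) * v.1 + (z.2 - x.2) * v.2)))

def g2 (x v z : ℝ × ℝ) : ℝ :=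
  (16 * π)⁻¹ * ((Real.log (Qf x z) + 1) * (2 * (v.1 ^ 2 + v.2 ^ 2))
    + (Qf x z)⁻¹ * (2 * ((z.1 - x.1) * v.1 + (z.2 - x.2) * v.2)
        * (2 * ((z.1 - x.1) * v.1 + (z.2 - x.2) * v.2))))

lemma hasFDerivAt_G0 (x z : ℝ × ℝ) (hz : z ≠ x) :
    HasFDerivAt (fun z => (16 * π)⁻¹ * (Qf x z * Real.log (Qf x z)))
      (pmap ((16 * π)⁻¹ * ((Real.log (Qf x z) + 1) * (2 * (z.1 - x.1))))
            ((16 * π)⁻¹ * ((Real.log (Qf x z) + 1) * (2 * (z.2 - x.2))))) z := by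
  have h := ((Real.hasDerivAt_mul_log (Qf_ne x z hz)).comp_hasFDerivAt z
    (hasFDerivAt_Qf x z)).const_mul ((16 * π)⁻¹)
  refine h.congr_fderiv ?_
  refine ContinuousLinearMap.ext fun w => ?_
  simp [pmap]
  ring

lemma hasFDerivAt_g1 (x v z : ℝ × ℝ) (hz : z ≠ x) :
    HasFDerivAt (g1 x v)
      (pmap ((16 * π)⁻¹ * ((Qf x z)⁻¹ * (2 * (z.1 - x.1))
               * (2 * ((z.1 - x.1) * v.1 + (z.2 - x.2) * v.2))
             + (Real.log (Qf x z) + 1) * (2 * v.1)))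
            ((16 * π)⁻¹ * ((Qf x z)⁻¹ * (2 * (z.2 - x.2))
               * (2 * ((z.1 - x.1) * v.1 + (z.2 - x.2) * v.2))
             + (Real.log (Qf x z) + 1) * (2 * v.2)))) z := by
  have hlog := (Real.hasDerivAt_log (Qf_ne x z hz)).comp_hasFDerivAt z (hasFDerivAt_Qf x z)
  have h := (((hlog.add_const 1).mul ((hasFDerivAt_Av x v z).const_mul 2)).const_mul
    ((16 * π)⁻¹))
  unfold g1
  refine h.congr_fderiv ?_
  refine ContinuousLinearMap.ext fun w => ?_
  simp [pmap]
  ring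

lemma hasFDerivAt_g2 (x v z : ℝ × ℝ) (hz : z ≠ x) :
    HasFDerivAt (g2 x v)
      (pmap ((16 * π)⁻¹ * ((2 * (v.1 ^ 2 + v.2 ^ 2)) * ((Qf x z)⁻¹ * (2 * (z.1 - x.1)))
             - (Qf x z ^ 2)⁻¹ * (2 * (z.1 - x.1))
                 * (2 * ((z.1 - x.1) * v.1 + (z.2 - x.2) * v.2)) ^ 2
             + (Qf x z)⁻¹ * (2 * (2 * ((z.1 - x.1) * v.1 + (z.2 - x.2) * v.2)) * (2 * v.1))))
            ((16 * π)⁻¹ * ((2 * (v.1 ^ 2 + v.2 ^ 2)) * ((Qf x z)⁻¹ * (2 * (z.2 - x.2)))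
             - (Qf x z ^ 2)⁻¹ * (2 * (z.2 - x.2))
                 * (2 * ((z.1 - x.1) * v.1 + (z.2 - x.2) * v.2)) ^ 2
             + (Qf x z)⁻¹ * (2 * (2 * ((z.1 - x.1) * v.1 + (z.2 - x.2) * v.2)) * (2 * v.2))))) z := by
  have hlog := (Real.hasDerivAt_log (Qf_ne x z hz)).comp_hasFDerivAt z (hasFDerivAt_Qf x z)
  have hA := (hasFDerivAt_Av x v z).const_mul (2 : ℝ)
  have hsq := hA.mul hA
  have hinv := (hasDerivAt_inv (Qf_ne x z hz)).comp_hasFDerivAt z (hasFDerivAt_Qf x z)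
  have h := ((((hlog.add_const 1).mul_const (2 * (v.1 ^ 2 + v.2 ^ 2))).add
    (hinv.mul hsq)).const_mul ((16 * π)⁻¹))
  simp only [Function.comp] at h
  unfold g2
  refine h.congr_fderiv ?_
  refine ContinuousLinearMap.ext fun w => ?_
  simp [pmap]
  ring

lemma third_deriv (x v w y : ℝ × ℝ) (hy : y ≠ x) :
    fderiv ℝ (fun z => fderiv ℝ (fun z => fderiv ℝ
        (fun z => (16 * π)⁻¹ * (Qf x z * Real.log (Qf x z))) z v) z v) y w
    = (16 * π)⁻¹ * ((2 * (v.1 ^ 2 + v.2 ^ 2))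
          * ((Qf x y)⁻¹ * (2 * ((y.1 - x.1) * w.1 + (y.2 - x.2) * w.2)))
        - (Qf x y ^ 2)⁻¹ * (2 * ((y.1 - x.1) * w.1 + (y.2 - x.2) * w.2))
            * (2 * ((y.1 - x.1) * v.1 + (y.2 - x.2) * v.2)) ^ 2
        + (Qf x y)⁻¹ * (2 * (2 * ((y.1 - x.1) * v.1 + (y.2 - x.2) * v.2))
            * (2 * (v.1 * w.1 + v.2 * w.2)))) := by
  have hU : IsOpen {p : ℝ × ℝ | p ≠ x} := isOpen_ne
  have hF1 : ∀ z, z ≠ x →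
      fderiv ℝ (fun z => (16 * π)⁻¹ * (Qf x z * Real.log (Qf x z))) z v = g1 x v z := by
    intro z hz
    rw [(hasFDerivAt_G0 x z hz).fderiv, pmap_apply]
    unfold g1; ring
  have hF2 : ∀ z, z ≠ x →
      fderiv ℝ (fun z => fderiv ℝ
        (fun z => (16 * π)⁻¹ * (Qf x z * Real.log (Qf x z))) z v) z v = g2 x v z := by
    intro z hz
    have hev : (fun z => fderiv ℝ
        (fun z => (16 * π)⁻¹ * (Qf x z * Real.log (Qf x z))) z v) =ᶠ[nhds z] g1 x v :=
      (hU.eventually_mem hz).mono fun z' hz' => hF1 z' hz'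
    rw [hev.fderiv_eq, (hasFDerivAt_g1 x v z hz).fderiv, pmap_apply]
    unfold g2; ring
  have hev2 : (fun z => fderiv ℝ (fun z => fderiv ℝ
      (fun z => (16 * π)⁻¹ * (Qf x z * Real.log (Qf x z))) z v) z v) =ᶠ[nhds y] g2 x v :=
    (hU.eventually_mem hy).mono fun z' hz' => hF2 z' hz'
  rw [hev2.fderiv_eq, (hasFDerivAt_g2 x v y hy).fderiv, pmap_apply]
  ring

theorem farkas_kernel_K1 (x y : ℝ × ℝ) (hxy : x ≠ y) (n τ : ℝ × ℝ)
    (hn : n.1 ^ 2 + n.2 ^ 2 = 1) (ht : τ.1 ^ 2 + τ.2 ^ 2 = 1)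
    (horth : n.1 * τ.1 + n.2 * τ.2 = 0)
    (G : ℝ × ℝ → ℝ)
    (hG : ∀ z, G z = (1 / (8 * π)) * nrm (x - z) ^ 2 * Real.log (nrm (x - z))) :
    fderiv ℝ (fun z => fderiv ℝ (fun z => fderiv ℝ G z n) z n) y n
      + 3 * fderiv ℝ (fun z => fderiv ℝ (fun z => fderiv ℝ G z τ) z τ) y n
      = (1 / π) * (dot (y - x) n) ^ 3 / (dot (y - x) (y - x)) ^ 2 := by

  have hy : y ≠ x := hxy.symm
  have hGeq : G = fun z => (16 * π)⁻¹ * (Qf x z * Real.log (Qf x z)) := by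
    funext z
    rw [hG z]
    have h0 : (0:ℝ) ≤ (x - z).1 ^ 2 + (x - z).2 ^ 2 := by positivity
    have h1 : nrm (x - z) ^ 2 = Qf x z := by
      rw [nrm, Real.sq_sqrt h0]
      simp only [Prod.fst_sub, Prod.snd_sub, Qf]
      ring
    have h2 : Real.log (nrm (x - z)) = Real.log (Qf x z) / 2 := by
      rw [nrm, Real.log_sqrt h0]
      congr 1
      simp only [Prod.fst_sub, Prod.snd_sub, Qf]
      ring_nf
    rw [h1, h2]
    have hπ : (π:ℝ) ≠ 0 := Real.pi_ne_zero
    rw [div_mul_eq_mul_div, mul_comm, ← mul_assoc]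
    field_simp
    ring
  subst hGeq
  rw [third_deriv x n n y hy, third_deriv x τ n y hy]
  have hdot1 : dot (y - x) (y - x) = Qf x y := by
    simp only [dot, Prod.fst_sub, Prod.snd_sub, Qf]; ring
  have hdot2 : dot (y - x) n = (y.1 - x.1) * n.1 + (y.2 - x.2) * n.2 := by
    simp only [dot, Prod.fst_sub, Prod.snd_sub]
  rw [hdot1, hdot2]
  -- orthonormality consequences
  have h1 : τ.1 ^ 2 = n.2 ^ 2 := by
    linear_combination (n.1 * τ.1 - n.2 * τ.2) * horth - τ.1 ^ 2 * hn + n.2 ^ 2 * ht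
  have h2 : τ.2 ^ 2 = n.1 ^ 2 := by
    linear_combination (n.2 * τ.2 - n.1 * τ.1) * horth - τ.2 ^ 2 * hn + n.1 ^ 2 * ht
  have h3 : τ.1 * τ.2 = -(n.1 * n.2) := by
    linear_combination (n.1 * τ.2 + n.2 * τ.1) * horth - τ.1 * τ.2 * hn - n.1 * n.2 * ht
  have hab : ((y.1 - x.1) * n.1 + (y.2 - x.2) * n.2) ^ 2
      + ((y.1 - x.1) * τ.1 + (y.2 - x.2) * τ.2) ^ 2 = Qf x y := by
    show _ = (y.1 - x.1) ^ 2 + (y.2 - x.2) ^ 2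
    linear_combination ((y.1 - x.1) ^ 2 + (y.2 - x.2) ^ 2) * hn + (y.1 - x.1) ^ 2 * h1
      + (y.2 - x.2) ^ 2 * h2 + 2 * (y.1 - x.1) * (y.2 - x.2) * h3
  have hbb : (2 * ((y.1 - x.1) * τ.1 + (y.2 - x.2) * τ.2)) ^ 2
      = 4 * (Qf x y - ((y.1 - x.1) * n.1 + (y.2 - x.2) * n.2) ^ 2) := by
    linear_combination 4 * hab
  have htn : τ.1 * n.1 + τ.2 * n.2 = 0 := by linear_combination horth
  have hnn : n.1 * n.1 + n.2 * n.2 = 1 := by linear_combination hn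
  rw [hbb, htn, hn, ht, hnn]
  have hπ : (π:ℝ) ≠ 0 := Real.pi_ne_zero
  have hQ : Qf x y ≠ 0 := Qf_ne x y hy
  field_simp
  ring
end
end

section
/- The Farkas kernel K₂ᶠ(x,y) = −G_{n_y n_y} + G_{τ_y τ_y} of the biharmonic Green's function G(x,y) = (1/(8π))|x−y|²log|x−y| equals (1/(2π))·(1/2 − (r·n(y))²/(r·r)), where r = y − x. -/
noncomputable section
open Real MeasureTheory

/-!
Write `ρ = |z - x|²`, so that `G = f ∘ ρ` with `f t = t log t / (16π)`. For any function of a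
symmetric quadratic form, the second derivative along `v` is `4 f''(ρ) ⟨r, v⟩² + 2 f'(ρ) ⟨v, v⟩`.
For unit vectors `n`, `τ` the `f'` terms cancel, and since `⟨r, n⟩² + ⟨r, τ⟩² = |r|²` what is left
is `4 f''(ρ) (ρ - 2 ⟨r, n⟩²)` with `f''(ρ) = 1 / (16π ρ)`.
-/

open Topology

section QuadraticForm

variable {E : Type*} [NormedAddCommGroup E] [NormedSpace ℝ E] {B : E →L[ℝ] E →L[ℝ] ℝ} (x : E)

theorem hasFDerivAt_bilinear_sub_self (hB : ∀ u w, B u w = B w u) (z : E) :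
    HasFDerivAt (fun w => B (w - x) (w - x)) ((2 : ℝ) • B (z - x)) z := by
  have hsub : HasFDerivAt (fun w : E => w - x) (ContinuousLinearMap.id ℝ E) z :=
    (hasFDerivAt_id z).sub_const x
  refine (B.hasFDerivAt_of_bilinear hsub hsub).congr_fderiv ?_
  ext v
  simp [hB v, two_smul]

theorem fderiv_comp_bilinear_sub_self_apply (hB : ∀ u w, B u w = B w u) {f : ℝ → ℝ} {d : ℝ}
    {z : E} (hf : HasDerivAt f d (B (z - x) (z - x))) (v : E) :
    fderiv ℝ (fun w => f (B (w - x) (w - x))) z v = d * (2 * B (z - x) v) := by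
  have h : HasFDerivAt (fun w => f (B (w - x) (w - x))) (d • (2 : ℝ) • B (z - x)) z :=
    hf.comp_hasFDerivAt z (hasFDerivAt_bilinear_sub_self x hB z)
  rw [h.fderiv]
  simp

theorem fderiv_fderiv_comp_bilinear_sub_self_apply (hB : ∀ u w, B u w = B w u)
    {f f' : ℝ → ℝ} {f'' : ℝ} {y : E}
    (hf : ∀ᶠ t in 𝓝 (B (y - x) (y - x)), HasDerivAt f (f' t) t)
    (hf' : HasDerivAt f' f'' (B (y - x) (y - x))) (v : E) :
    fderiv ℝ (fun z => fderiv ℝ (fun w => f (B (w - x) (w - x))) z v) y v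
      = 4 * f'' * B (y - x) v ^ 2 + 2 * f' (B (y - x) (y - x)) * B v v := by
  have hQ := hasFDerivAt_bilinear_sub_self x hB y
  have hfirst : (fun z => fderiv ℝ (fun w => f (B (w - x) (w - x))) z v)
      =ᶠ[𝓝 y] fun z => f' (B (z - x) (z - x)) * (2 * B (z - x) v) := by
    filter_upwards [hQ.continuousAt.eventually hf] with z hz
    exact fderiv_comp_bilinear_sub_self_apply x hB hz v
  have hlin : HasFDerivAt (fun z => B (z - x) v) (B.flip v) y :=
    (B.flip v).hasFDerivAt.comp y ((hasFDerivAt_id y).sub_const x)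
  have hsecond : HasFDerivAt (fun z => f' (B (z - x) (z - x)) * (2 * B (z - x) v))
      (f' (B (y - x) (y - x)) • (2 : ℝ) • B.flip v
        + (2 * B (y - x) v) • f'' • (2 : ℝ) • B (y - x)) y :=
    (hf'.comp_hasFDerivAt y hQ).mul (hlin.const_mul 2)
  rw [hfirst.fderiv_eq, hsecond.fderiv]
  simp
  ring

end QuadraticForm

def dotBilinear : ℝ × ℝ →L[ℝ] ℝ × ℝ →L[ℝ] ℝ :=
  (ContinuousLinearMap.mul ℝ ℝ).bilinearComp (.fst ℝ ℝ ℝ) (.fst ℝ ℝ ℝ)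
    + (ContinuousLinearMap.mul ℝ ℝ).bilinearComp (.snd ℝ ℝ ℝ) (.snd ℝ ℝ ℝ)

@[simp]
theorem dotBilinear_apply (a b : ℝ × ℝ) : dotBilinear a b = dot a b := by
  simp [dotBilinear, dot]

theorem dot_comm (a b : ℝ × ℝ) : dot a b = dot b a := by
  simp only [dot]; ring

theorem dot_neg_neg (a b : ℝ × ℝ) : dot (-a) (-b) = dot a b := by
  simp only [dot, Prod.fst_neg, Prod.snd_neg]; ring

theorem dot_self_ne_zero {r : ℝ × ℝ} (hr : r ≠ 0) : dot r r ≠ 0 := by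
  contrapose! hr
  obtain ⟨h1, h2⟩ := mul_self_add_mul_self_eq_zero.mp hr
  exact Prod.ext h1 h2

theorem dot_sq_add_dot_sq_of_orthonormal {n τ : ℝ × ℝ} (hn : n.1 ^ 2 + n.2 ^ 2 = 1)
    (ht : τ.1 ^ 2 + τ.2 ^ 2 = 1) (horth : n.1 * τ.1 + n.2 * τ.2 = 0) (r : ℝ × ℝ) :
    dot r n ^ 2 + dot r τ ^ 2 = dot r r := by
  -- `τ = d • (-n.2, n.1)`, where `d = ±1` is the determinant of `(n, τ)`
  set d := n.1 * τ.2 - n.2 * τ.1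
  have hd : d ^ 2 = 1 := by
    linear_combination (τ.1 ^ 2 + τ.2 ^ 2) * hn + ht - (n.1 * τ.1 + n.2 * τ.2) * horth
  have hτ : dot r τ = d * (r.2 * n.1 - r.1 * n.2) := by
    simp only [dot]
    linear_combination (-(r.1 * τ.1) - r.2 * τ.2) * hn + (r.1 * n.1 + r.2 * n.2) * horth
  rw [hτ]
  simp only [dot]
  linear_combination (r.2 * n.1 - r.1 * n.2) ^ 2 * hd + (r.1 ^ 2 + r.2 ^ 2) * hn

theorem nrm_sq_mul_log_nrm (u : ℝ × ℝ) :
    nrm u ^ 2 * Real.log (nrm u) = dot u u * Real.log (dot u u) / 2 := by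
  have hu : 0 ≤ dot u u := add_nonneg (mul_self_nonneg _) (mul_self_nonneg _)
  have hdot : u.1 ^ 2 + u.2 ^ 2 = dot u u := by simp only [dot]; ring
  rw [nrm, hdot, Real.sq_sqrt hu, Real.log_sqrt hu]
  ring

theorem biharmonic_green_eq_dotBilinear (x z : ℝ × ℝ) :
    1 / (8 * π) * nrm (x - z) ^ 2 * Real.log (nrm (x - z))
      = 1 / (16 * π) * (dotBilinear (z - x) (z - x) * Real.log (dotBilinear (z - x) (z - x))) := by
  rw [mul_assoc, nrm_sq_mul_log_nrm, dotBilinear_apply, ← neg_sub, dot_neg_neg]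
  ring

theorem farkas_kernel_K2 (x y : ℝ × ℝ) (hxy : x ≠ y) (n τ : ℝ × ℝ)
    (hn : n.1 ^ 2 + n.2 ^ 2 = 1) (ht : τ.1 ^ 2 + τ.2 ^ 2 = 1)
    (horth : n.1 * τ.1 + n.2 * τ.2 = 0)
    (G : ℝ × ℝ → ℝ)
    (hG : ∀ z, G z = (1 / (8 * π)) * nrm (x - z) ^ 2 * Real.log (nrm (x - z))) :
    -(fderiv ℝ (fun z => fderiv ℝ G z n) y n)
      + fderiv ℝ (fun z => fderiv ℝ G z τ) y τ
      = (1 / (2 * π)) * (1 / 2 - (dot (y - x) n) ^ 2 / dot (y - x) (y - x)) := by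
  have hρ : dot (y - x) (y - x) ≠ 0 := dot_self_ne_zero (sub_ne_zero.mpr hxy.symm)
  have hf : ∀ᶠ t in 𝓝 (dotBilinear (y - x) (y - x)), HasDerivAt
      (fun t => 1 / (16 * π) * (t * Real.log t)) (1 / (16 * π) * (Real.log t + 1)) t := by
    rw [dotBilinear_apply]
    filter_upwards [eventually_ne_nhds hρ] with t ht
    exact (Real.hasDerivAt_mul_log ht).const_mul _
  have hf' : HasDerivAt (fun t => 1 / (16 * π) * (Real.log t + 1))
      (1 / (16 * π) * (dot (y - x) (y - x))⁻¹) (dotBilinear (y - x) (y - x)) := by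
    rw [dotBilinear_apply]
    simpa using ((Real.hasDerivAt_log hρ).add_const 1).const_mul (1 / (16 * π))
  have hsymm : ∀ u w, dotBilinear u w = dotBilinear w u := by simp [dot_comm]
  rw [funext fun z => (hG z).trans (biharmonic_green_eq_dotBilinear x z),
    fderiv_fderiv_comp_bilinear_sub_self_apply x hsymm hf hf',
    fderiv_fderiv_comp_bilinear_sub_self_apply x hsymm hf hf']
  have hnn : dot n n = 1 := by rw [← hn, dot]; ring
  have hττ : dot τ τ = 1 := by rw [← ht, dot]; ring
  have hparseval := dot_sq_add_dot_sq_of_orthonormal hn ht horth (y - x)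
  simp only [dotBilinear_apply, hnn, hττ]
  rw [show dot (y - x) τ ^ 2 = dot (y - x) (y - x) - dot (y - x) n ^ 2 by linarith]
  field_simp
  ring
end
end
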